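/- arXiv:1704.07196 — 6 statements merged into one kernel-verified Lean document; each statement's English description precedes it below -/
import Mathlib

section
/- For every integer m ≥ 1 and f = x·(x^{2m} + (xz + y^2)^m) in C[x,y,z], the partial derivative f_z divides the polynomial g = −2m·x·(xz + y^2)^{m−1}·f_x + y^{2m−1}·f_y in C[x,y,z]. -/
/-!
With `u = x z + y²` we have `f = x^(2m+1) + x u^m`, so `f_z = m x² u^(m-1)`,
`f_y = 2m x y u^(m-1)` and `g = 2m x u^(m-1) (y^(2m) - f_x)`. Modulo `x` the form `u` reduces
to `y²`, so `f_x ≡ u^m ≡ y^(2m)`; hence `x ∣ y^(2m) - f_x` and `f_z = m x² u^(m-1)`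
divides `g`.
-/

open MvPolynomial

namespace MvPolynomial

variable {R : Type*} [CommRing R] (m : ℕ)

theorem pderiv_zero_x_mul_pow_add_pow :
    pderiv 0 (X 0 * (X 0 ^ (2 * m) + (X 0 * X 2 + X 1 ^ 2) ^ m) : MvPolynomial (Fin 3) R) =
      (2 * (m : MvPolynomial (Fin 3) R) + 1) * X 0 ^ (2 * m) + (X 0 * X 2 + X 1 ^ 2) ^ m
        + (m : MvPolynomial (Fin 3) R) * X 0 * X 2 * (X 0 * X 2 + X 1 ^ 2) ^ (m - 1) := by
  rcases Nat.eq_zero_or_pos m with rfl | hm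
  · simp
  · simp
    rw [← pow_sub_one_mul (by omega : 2 * m ≠ 0)]
    ring

theorem pderiv_one_x_mul_pow_add_pow :
    pderiv 1 (X 0 * (X 0 ^ (2 * m) + (X 0 * X 2 + X 1 ^ 2) ^ m) : MvPolynomial (Fin 3) R) =
      2 * (m : MvPolynomial (Fin 3) R) * X 0 * X 1 * (X 0 * X 2 + X 1 ^ 2) ^ (m - 1) := by
  simp
  ring

theorem pderiv_two_x_mul_pow_add_pow :
    pderiv 2 (X 0 * (X 0 ^ (2 * m) + (X 0 * X 2 + X 1 ^ 2) ^ m) : MvPolynomial (Fin 3) R) =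
      (m : MvPolynomial (Fin 3) R) * X 0 ^ 2 * (X 0 * X 2 + X 1 ^ 2) ^ (m - 1) := by
  simp
  ring

theorem X_zero_dvd_pow_sub_pderiv_zero (hm : 1 ≤ m) :
    (X 0 : MvPolynomial (Fin 3) R) ∣
      X 1 ^ (2 * m) - pderiv 0 (X 0 * (X 0 ^ (2 * m) + (X 0 * X 2 + X 1 ^ 2) ^ m)) := by
  have hu : (X 0 : MvPolynomial (Fin 3) R) ∣ (X 0 * X 2 + X 1 ^ 2) ^ m - (X 1 ^ 2) ^ m := by
    refine (dvd_mul_right (X 0) (X 2)).trans ?_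
    convert sub_dvd_pow_sub_pow (X 0 * X 2 + X 1 ^ 2 : MvPolynomial (Fin 3) R) (X 1 ^ 2) m using 1
    ring
  have hx : (X 0 : MvPolynomial (Fin 3) R) ∣
      (2 * (m : MvPolynomial (Fin 3) R) + 1) * X 0 ^ (2 * m) :=
    (dvd_pow_self _ (by omega)).mul_left _
  have hz : (X 0 : MvPolynomial (Fin 3) R) ∣
      (m : MvPolynomial (Fin 3) R) * X 0 * X 2 * (X 0 * X 2 + X 1 ^ 2) ^ (m - 1) :=
    ((dvd_mul_left _ _).mul_right _).mul_right _
  rw [pderiv_zero_x_mul_pow_add_pow, pow_mul,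
    show ∀ a b c d : MvPolynomial (Fin 3) R, a - (b + c + d) = -(c - a) - b - d by intros; ring]
  exact (hu.neg_right.sub hx).sub hz

end MvPolynomial

theorem stmt3 (m : ℕ) (hm : 1 ≤ m) :
    let f : MvPolynomial (Fin 3) ℂ := X 0 * (X 0 ^ (2 * m) + (X 0 * X 2 + X 1 ^ 2) ^ m)
    pderiv 2 f ∣
      -(2 * (m : MvPolynomial (Fin 3) ℂ)) * X 0 * (X 0 * X 2 + X 1 ^ 2) ^ (m - 1) * pderiv 0 f
        + X 1 ^ (2 * m - 1) * pderiv 1 f := by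
  intro f
  obtain ⟨q, hq⟩ := X_zero_dvd_pow_sub_pderiv_zero (R := ℂ) m hm
  have hy : (X 1 : MvPolynomial (Fin 3) ℂ) ^ (2 * m - 1) * X 1 = X 1 ^ (2 * m) :=
    pow_sub_one_mul (by omega) _
  refine ⟨2 * q, ?_⟩
  rw [pderiv_one_x_mul_pow_add_pow, pderiv_two_x_mul_pow_add_pow]
  linear_combination (2 * (m : MvPolynomial (Fin 3) ℂ) * X 0 * (X 0 * X 2 + X 1 ^ 2) ^ (m - 1)) *
    (hq + hy)
end

section
/- Let d ≥ 3 be an integer and let f ∈ C[x,y,z] be given by f = x^{2m} + (xz + y^2)^m if d = 2m is even (m ≥ 2) and by f = x·(x^{2m} + (xz + y^2)^m) if d = 2m + 1 is odd (m ≥ 1). Then the S-module AR(f) of Jacobian syzygies of f is a free S-module of rank 2, admitting a basis consisting of two homogeneous syzygies, one of degree 1 and one of degree d − 2. -/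
/-!
Write `q = xz + y²`. In both cases `f` is a polynomial in `x` and `q`, so `f_y = 2y·G` and
`f_z = x·G` for a common factor `G`; hence `(0, x, -2y)` (the derivation `x∂_y - 2y∂_z`, which
kills `x` and `q`) is a syzygy of degree 1. Splitting `f_x = x·α + 2y·β` gives a second syzygy
`(G, -β, -α)` of degree `d - 2`. The prime factors of `G` (among `x` and the irreducible quadric
`q`) do not divide `f_x`, so the first entry of any syzygy is a multiple `A·G`; subtracting
`A·(G, -β, -α)` leaves a syzygy `(0, b, c)` with `2y·b + x·c = 0`, which is a multiple of
`(0, x, -2y)`.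
-/

open MvPolynomial

/-- The Jacobian map sending a triple `(a,b,c)` to `a·f_x + b·f_y + c·f_z`. -/
noncomputable def jacMap (f : MvPolynomial (Fin 3) ℂ) :
    (Fin 3 → MvPolynomial (Fin 3) ℂ) →ₗ[MvPolynomial (Fin 3) ℂ] MvPolynomial (Fin 3) ℂ where
  toFun v := ∑ i, v i * pderiv i f
  map_add' a b := by simp [add_mul, Finset.sum_add_distrib]
  map_smul' c a := by simp [Finset.mul_sum, mul_assoc]

/-- The module of Jacobian syzygies `AR(f)`. -/
noncomputable def AR (f : MvPolynomial (Fin 3) ℂ) :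
    Submodule (MvPolynomial (Fin 3) ℂ) (Fin 3 → MvPolynomial (Fin 3) ℂ) :=
  LinearMap.ker (jacMap f)

section Syzygy

open Submodule LinearMap

variable {R : Type*} [CommRing R] {p : Fin 3 → R} {u w G α β : R}

theorem mem_ker_linearCombination_fin_three {v : Fin 3 → R} :
    v ∈ ker (Fintype.linearCombination R p) ↔ v 0 * p 0 + v 1 * p 1 + v 2 * p 2 = 0 := by
  rw [mem_ker, Fintype.linearCombination_apply, Fin.sum_univ_three]
  rfl

variable [IsDomain R]

theorem linearIndependent_pair_zero_neg (hu : u ≠ 0) (hG : G ≠ 0) :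
    LinearIndependent R ![![0, u, -w], ![G, -β, -α]] := by
  refine LinearIndependent.pair_iff.mpr fun s t hst => ?_
  have h0 : s * 0 + t * G = 0 := congrFun hst 0
  have h1 : s * u + t * -β = 0 := congrFun hst 1
  have ht : t = 0 := (mul_eq_zero.mp (by linear_combination h0)).resolve_right hG
  exact ⟨(mul_eq_zero.mp (by linear_combination h1 + β * ht)).resolve_right hu, ht⟩

variable [DecompositionMonoid R]

theorem ker_linearCombination_eq_span_pair (hu : u ≠ 0) (huw : IsRelPrime u w) (hG : G ≠ 0)
    (hGp : IsRelPrime G (p 0)) (h0 : p 0 = u * α + w * β) (h1 : p 1 = w * G)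
    (h2 : p 2 = u * G) :
    ker (Fintype.linearCombination R p) = span R {![0, u, -w], ![G, -β, -α]} := by
  refine le_antisymm (fun v hv => ?_) (span_le.mpr ?_)
  · rw [mem_ker_linearCombination_fin_three, h1, h2] at hv
    obtain ⟨A, hA⟩ : G ∣ v 0 :=
      hGp.dvd_of_dvd_mul_right ⟨-(w * v 1 + u * v 2), by linear_combination hv⟩
    have hA' : A * p 0 + w * v 1 + u * v 2 = 0 :=
      mul_left_cancel₀ hG (by linear_combination hv - p 0 * hA)
    obtain ⟨t, ht⟩ : u ∣ v 1 + A * β :=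
      huw.dvd_of_dvd_mul_left ⟨-(v 2 + A * α), by linear_combination hA' - A * h0⟩
    have ht' : v 2 = -(A * α) - w * t :=
      mul_left_cancel₀ hu (by linear_combination hA' - A * h0 - w * ht)
    refine mem_span_pair.mpr ⟨t, A, funext fun i => ?_⟩
    fin_cases i
    · change t * 0 + A * G = v 0
      linear_combination -hA
    · change t * u + A * -β = v 1
      linear_combination -ht
    · change t * -w + A * -α = v 2
      linear_combination -ht'
  · rintro r (rfl | rfl) <;> rw [SetLike.mem_coe, mem_ker_linearCombination_fin_three]
    · change 0 * p 0 + u * p 1 + -w * p 2 = 0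
      rw [h1, h2]
      ring
    · change G * p 0 + -β * p 1 + -α * p 2 = 0
      rw [h0, h1, h2]
      ring

theorem exists_basis_ker_linearCombination (hu : u ≠ 0) (huw : IsRelPrime u w) (hG : G ≠ 0)
    (hGp : IsRelPrime G (p 0)) (h0 : p 0 = u * α + w * β) (h1 : p 1 = w * G)
    (h2 : p 2 = u * G) :
    ∃ B : Module.Basis (Fin 2) R (ker (Fintype.linearCombination R p)),
      (B 0 : Fin 3 → R) = ![0, u, -w] ∧ (B 1 : Fin 3 → R) = ![G, -β, -α] := by
  have hspan := ker_linearCombination_eq_span_pair hu huw hG hGp h0 h1 h2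
  rw [← Matrix.range_cons_cons_empty _ _ ![]] at hspan
  exact ⟨(Module.Basis.span (linearIndependent_pair_zero_neg hu hG)).map
    (LinearEquiv.ofEq _ _ hspan.symm), by simp, by simp⟩

end Syzygy

theorem Irreducible.isRelPrime_of_eval {σ R : Type*} [CommRing R] {p g : MvPolynomial σ R}
    (hp : Irreducible p) (x : σ → R) (hpx : eval x p = 0) (hgx : eval x g ≠ 0) :
    IsRelPrime p g :=
  hp.isRelPrime_iff_not_dvd.mpr fun h => hgx (zero_dvd_iff.mp (hpx ▸ map_dvd (eval x) h))

theorem prime_X_zero_mul_X_two_add_X_one_sq {R : Type*} [CommRing R] [IsDomain R]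
    [UniqueFactorizationMonoid R] : Prime (X 0 * X 2 + X 1 ^ 2 : MvPolynomial (Fin 3) R) := by
  have h : finSuccEquiv R 2 (X 0 * X 2 + X 1 ^ 2) =
      Polynomial.C (X 1) * Polynomial.X + Polynomial.C (X 0 ^ 2) := by
    rw [show (2 : Fin 3) = (1 : Fin 2).succ from rfl, show (1 : Fin 3) = (0 : Fin 2).succ from rfl]
    simp only [map_add, map_mul, map_pow, finSuccEquiv_X_zero, finSuccEquiv_X_succ]
    ring
  rw [← MulEquiv.prime_iff (finSuccEquiv R 2).toMulEquiv]
  exact h ▸ (Polynomial.irreducible_C_mul_X_add_C (X_ne_zero _)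
    (X_prime.irreducible.isRelPrime_of_eval ![1, 0] (by simp) (by simp))).prime

section Homogeneous

variable {σ R : Type*} [CommSemiring R]

theorem isHomogeneous_natCast (k : ℕ) : IsHomogeneous (k : MvPolynomial σ R) 0 :=
  map_natCast (C : R →+* MvPolynomial σ R) k ▸ isHomogeneous_C σ (k : R)

theorem forall_isHomogeneous_vecCons {a b c : MvPolynomial σ R} {n : ℕ}
    (ha : a.IsHomogeneous n) (hb : b.IsHomogeneous n) (hc : c.IsHomogeneous n) :
    ∀ i, (![a, b, c] i).IsHomogeneous n := by
  intro i
  fin_cases i <;> assumption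

end Homogeneous

section Quadric

variable {K : Type*} [Field K]

local notation "S" => MvPolynomial (Fin 3) K
local notation "𝔮" => (X 0 * X 2 + X 1 ^ 2 : S)

theorem isHomogeneous_X_zero_mul_X_two_add_X_one_sq : IsHomogeneous 𝔮 2 :=
  ((isHomogeneous_X K (0 : Fin 3)).mul (isHomogeneous_X K (2 : Fin 3))).add
    ((isHomogeneous_X K (1 : Fin 3)).pow 2)

theorem forall_isHomogeneous_zero_X_neg_two_mul_X :
    ∀ i, (![0, X 0, -(2 * X 1)] i : S).IsHomogeneous 1 := by
  refine forall_isHomogeneous_vecCons (isHomogeneous_zero _ _ _) (isHomogeneous_X _ _) ?_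
  have h := ((isHomogeneous_X K (1 : Fin 3)).C_mul (2 : K)).neg
  rw [map_ofNat] at h
  exact h

theorem forall_isHomogeneous_syzygy_even (n : ℕ) :
    ∀ i, (![((n + 2 : ℕ) : S) * 𝔮 ^ (n + 1),
      -(C 2⁻¹ * (((n + 2 : ℕ) : S) * X 1 * X 2 * 𝔮 ^ n)),
      -(((2 * n + 4 : ℕ) : S) * X 0 ^ (2 * n + 2) + ((n + 2 : ℕ) : S) * X 2 ^ 2 * 𝔮 ^ n)] i
      ).IsHomogeneous (2 * n + 2) := by
  have hq := isHomogeneous_X_zero_mul_X_two_add_X_one_sq (K := K)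
  refine forall_isHomogeneous_vecCons ?_ (IsHomogeneous.C_mul ?_ _).neg
    (IsHomogeneous.add ?_ ?_).neg
  · exact (by ring : 0 + 2 * (n + 1) = 2 * n + 2) ▸
      (isHomogeneous_natCast _).mul (hq.pow (n + 1))
  · exact (by ring : 0 + 1 + 1 + 2 * n = 2 * n + 2) ▸
      (((isHomogeneous_natCast _).mul (isHomogeneous_X K (1 : Fin 3))).mul
        (isHomogeneous_X K (2 : Fin 3))).mul (hq.pow n)
  · simpa only [zero_add] using
      (isHomogeneous_natCast _).mul (isHomogeneous_X_pow (0 : Fin 3) (2 * n + 2))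
  · exact (by ring : 0 + 1 * 2 + 2 * n = 2 * n + 2) ▸
      ((isHomogeneous_natCast _).mul ((isHomogeneous_X K (2 : Fin 3)).pow 2)).mul (hq.pow n)

theorem forall_isHomogeneous_syzygy_odd (n : ℕ) :
    ∀ i, (![((n + 1 : ℕ) : S) * X 0 * 𝔮 ^ n, -(C 2⁻¹ * (X 1 * 𝔮 ^ n)),
      -(((2 * n + 3 : ℕ) : S) * X 0 ^ (2 * n + 1) + ((n + 2 : ℕ) : S) * X 2 * 𝔮 ^ n)] i
      ).IsHomogeneous (2 * n + 1) := by
  have hq := isHomogeneous_X_zero_mul_X_two_add_X_one_sq (K := K)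
  refine forall_isHomogeneous_vecCons ?_ (IsHomogeneous.C_mul ?_ _).neg
    (IsHomogeneous.add ?_ ?_).neg
  · exact (by ring : 0 + 1 + 2 * n = 2 * n + 1) ▸
      ((isHomogeneous_natCast _).mul (isHomogeneous_X K (0 : Fin 3))).mul (hq.pow n)
  · exact (by ring : 1 + 2 * n = 2 * n + 1) ▸ (isHomogeneous_X K (1 : Fin 3)).mul (hq.pow n)
  · simpa only [zero_add] using
      (isHomogeneous_natCast _).mul (isHomogeneous_X_pow (0 : Fin 3) (2 * n + 1))
  · exact (by ring : 0 + 1 + 2 * n = 2 * n + 1) ▸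
      ((isHomogeneous_natCast _).mul (isHomogeneous_X K (2 : Fin 3))).mul (hq.pow n)

theorem two_mul_C_inv_two {σ : Type*} [NeZero (2 : K)] :
    (2 : MvPolynomial σ K) * C 2⁻¹ = 1 := by
  rw [← map_ofNat C 2, ← C_mul, mul_inv_cancel₀ two_ne_zero, C_1]

variable [CharZero K]

theorem isUnit_natCast {σ : Type*} {k : ℕ} (hk : k ≠ 0) : IsUnit (k : MvPolynomial σ K) :=
  map_natCast (C : K →+* MvPolynomial σ K) k ▸ (Nat.cast_ne_zero.mpr hk).isUnit.map C

theorem isRelPrime_X_zero_two_mul_X_one : IsRelPrime (X 0 : S) (2 * X 1) :=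
  X_prime.irreducible.isRelPrime_of_eval ![0, 1, 0] (by simp) (by simp)

open LinearMap in
theorem exists_basis_ker_pderiv_even {m : ℕ} (hm : 2 ≤ m) :
    ∃ B : Module.Basis (Fin 2) S
      (ker (Fintype.linearCombination S fun i => pderiv i (X 0 ^ (2 * m) + 𝔮 ^ m))),
      (∀ i, ((B 0).1 i).IsHomogeneous 1) ∧ (∀ i, ((B 1).1 i).IsHomogeneous (2 * m - 2)) := by
  obtain ⟨n, rfl⟩ := Nat.exists_eq_add_of_le' hm
  set G : S := ((n + 2 : ℕ) : S) * 𝔮 ^ (n + 1)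
  set α : S :=
    ((2 * n + 4 : ℕ) : S) * X 0 ^ (2 * n + 2) + ((n + 2 : ℕ) : S) * X 2 ^ 2 * 𝔮 ^ n
  set β : S := C 2⁻¹ * (((n + 2 : ℕ) : S) * X 1 * X 2 * 𝔮 ^ n)
  have h0 : pderiv 0 (X 0 ^ (2 * (n + 2)) + 𝔮 ^ (n + 2)) = X 0 * α + 2 * X 1 * β := by
    rw [show 2 * (n + 2) = 2 * n + 3 + 1 by ring]
    simp only [map_add, pderiv_mul, pderiv_pow, pderiv_X_self, pderiv_X_of_ne, ne_eq,
      Fin.reduceEq, not_false_eq_true, Nat.add_one_sub_one, α, β]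
    linear_combination (-(((n + 2 : ℕ) : S) * X 1 ^ 2 * X 2 * 𝔮 ^ n)) *
      two_mul_C_inv_two (σ := Fin 3) (K := K)
  have h1 : pderiv 1 (X 0 ^ (2 * (n + 2)) + 𝔮 ^ (n + 2)) = 2 * X 1 * G := by
    simp only [map_add, pderiv_mul, pderiv_pow, pderiv_X_self, pderiv_X_of_ne, ne_eq,
      Fin.reduceEq, not_false_eq_true, Nat.reduceSubDiff, G]
    ring
  have h2 : pderiv 2 (X 0 ^ (2 * (n + 2)) + 𝔮 ^ (n + 2)) = X 0 * G := by
    simp only [map_add, pderiv_mul, pderiv_pow, pderiv_X_self, pderiv_X_of_ne, ne_eq,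
      Fin.reduceEq, not_false_eq_true, Nat.reduceSubDiff, G]
    ring
  have hunit : IsUnit ((n + 2 : ℕ) : S) := isUnit_natCast (by omega)
  have hG : IsRelPrime G (X 0 * α + 2 * X 1 * β) :=
    (isRelPrime_mul_unit_left_left hunit).mpr <| IsRelPrime.pow_left <|
      prime_X_zero_mul_X_two_add_X_one_sq.irreducible.isRelPrime_of_eval ![1, 0, 0] (by simp)
        (by simpa [α, β] using (Nat.cast_ne_zero (R := K)).mpr (by omega : 2 * n + 4 ≠ 0))
  have hG0 : G ≠ 0 :=
    mul_ne_zero hunit.ne_zero (pow_ne_zero _ prime_X_zero_mul_X_two_add_X_one_sq.ne_zero)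
  obtain ⟨B, hB0, hB1⟩ := exists_basis_ker_linearCombination
    (p := fun i => pderiv i (X 0 ^ (2 * (n + 2)) + 𝔮 ^ (n + 2))) (X_ne_zero 0)
    isRelPrime_X_zero_two_mul_X_one hG0 (h0 ▸ hG) h0 h1 h2
  refine ⟨B, hB0 ▸ forall_isHomogeneous_zero_X_neg_two_mul_X, ?_⟩
  rw [hB1, show 2 * (n + 2) - 2 = 2 * n + 2 by omega]
  exact forall_isHomogeneous_syzygy_even n

open LinearMap in
theorem exists_basis_ker_pderiv_odd {m : ℕ} (hm : 1 ≤ m) :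
    ∃ B : Module.Basis (Fin 2) S
      (ker (Fintype.linearCombination S fun i => pderiv i (X 0 * (X 0 ^ (2 * m) + 𝔮 ^ m)))),
      (∀ i, ((B 0).1 i).IsHomogeneous 1) ∧ (∀ i, ((B 1).1 i).IsHomogeneous (2 * m - 1)) := by
  obtain ⟨n, rfl⟩ := Nat.exists_eq_add_of_le' hm
  set G : S := ((n + 1 : ℕ) : S) * X 0 * 𝔮 ^ n
  set α : S := ((2 * n + 3 : ℕ) : S) * X 0 ^ (2 * n + 1) + ((n + 2 : ℕ) : S) * X 2 * 𝔮 ^ n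
  set β : S := C 2⁻¹ * (X 1 * 𝔮 ^ n)
  have h0 : pderiv 0 (X 0 * (X 0 ^ (2 * (n + 1)) + 𝔮 ^ (n + 1))) = X 0 * α + 2 * X 1 * β := by
    rw [show 2 * (n + 1) = 2 * n + 1 + 1 by ring]
    simp only [map_add, pderiv_mul, pderiv_pow, pderiv_X_self, pderiv_X_of_ne, ne_eq,
      Fin.reduceEq, not_false_eq_true, Nat.add_one_sub_one, α, β]
    linear_combination (norm := (push_cast; ring)) (-(X 1 ^ 2 * 𝔮 ^ n)) *
      two_mul_C_inv_two (σ := Fin 3) (K := K)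
  have h1 : pderiv 1 (X 0 * (X 0 ^ (2 * (n + 1)) + 𝔮 ^ (n + 1))) = 2 * X 1 * G := by
    simp only [map_add, pderiv_mul, pderiv_pow, pderiv_X_self, pderiv_X_of_ne, ne_eq,
      Fin.reduceEq, not_false_eq_true, Nat.add_one_sub_one, G]
    ring
  have h2 : pderiv 2 (X 0 * (X 0 ^ (2 * (n + 1)) + 𝔮 ^ (n + 1))) = X 0 * G := by
    simp only [map_add, pderiv_mul, pderiv_pow, pderiv_X_self, pderiv_X_of_ne, ne_eq,
      Fin.reduceEq, not_false_eq_true, Nat.add_one_sub_one, G]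
    ring
  have hunit : IsUnit ((n + 1 : ℕ) : S) := isUnit_natCast (by omega)
  have hG : IsRelPrime G (X 0 * α + 2 * X 1 * β) := by
    refine .mul_left ((isRelPrime_mul_unit_left_left hunit).mpr ?_) (.pow_left ?_)
    · exact X_prime.irreducible.isRelPrime_of_eval ![0, 1, 0] (by simp) (by simp [α, β])
    · exact prime_X_zero_mul_X_two_add_X_one_sq.irreducible.isRelPrime_of_eval ![1, 0, 0]
        (by simp)
        (by simpa [α, β] using (Nat.cast_ne_zero (R := K)).mpr (by omega : 2 * n + 3 ≠ 0))
  have hG0 : G ≠ 0 := mul_ne_zero (mul_ne_zero hunit.ne_zero (X_ne_zero 0))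
    (pow_ne_zero _ prime_X_zero_mul_X_two_add_X_one_sq.ne_zero)
  obtain ⟨B, hB0, hB1⟩ := exists_basis_ker_linearCombination
    (p := fun i => pderiv i (X 0 * (X 0 ^ (2 * (n + 1)) + 𝔮 ^ (n + 1)))) (X_ne_zero 0)
    isRelPrime_X_zero_two_mul_X_one hG0 (h0 ▸ hG) h0 h1 h2
  refine ⟨B, hB0 ▸ forall_isHomogeneous_zero_X_neg_two_mul_X, ?_⟩
  rw [hB1, show 2 * (n + 1) - 1 = 2 * n + 1 by omega]
  exact forall_isHomogeneous_syzygy_odd n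

end Quadric

theorem AR_eq_ker (f : MvPolynomial (Fin 3) ℂ) :
    AR f = LinearMap.ker (Fintype.linearCombination _ fun i => pderiv i f) := rfl

theorem stmt4_general (d m : ℕ) (f : MvPolynomial (Fin 3) ℂ)
    (hf : (d = 2 * m ∧ 2 ≤ m ∧ f = X 0 ^ (2 * m) + (X 0 * X 2 + X 1 ^ 2) ^ m) ∨
          (d = 2 * m + 1 ∧ 1 ≤ m ∧ f = X 0 * (X 0 ^ (2 * m) + (X 0 * X 2 + X 1 ^ 2) ^ m))) :
    ∃ B : Module.Basis (Fin 2) (MvPolynomial (Fin 3) ℂ) (AR f),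
      (∀ i, ((B 0).1 i).IsHomogeneous 1) ∧ (∀ i, ((B 1).1 i).IsHomogeneous (d - 2)) := by
  rw [AR_eq_ker]
  rcases hf with ⟨rfl, hm, rfl⟩ | ⟨rfl, hm, rfl⟩
  · exact exists_basis_ker_pderiv_even hm
  · rw [show 2 * m + 1 - 2 = 2 * m - 1 by omega]
    exact exists_basis_ker_pderiv_odd hm

theorem stmt4 (d m : ℕ) (f : MvPolynomial (Fin 3) ℂ) (hd : 3 ≤ d)
    (hf : (d = 2 * m ∧ 2 ≤ m ∧ f = X 0 ^ (2 * m) + (X 0 * X 2 + X 1 ^ 2) ^ m) ∨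
          (d = 2 * m + 1 ∧ 1 ≤ m ∧ f = X 0 * (X 0 ^ (2 * m) + (X 0 * X 2 + X 1 ^ 2) ^ m))) :
    ∃ B : Module.Basis (Fin 2) (MvPolynomial (Fin 3) ℂ) (AR f),
      (∀ i, ((B 0).1 i).IsHomogeneous 1) ∧ (∀ i, ((B 1).1 i).IsHomogeneous (d - 2)) :=
  stmt4_general d m f hf
end

section
/- Let h ∈ C[x,y,z] be a homogeneous polynomial of degree e satisfying x·h_y − 2y·h_z = 0. If e = 2e₁ is even, then there exists a homogeneous polynomial h₁ ∈ C[u,v] of degree e₁ such that h = h₁(x^2, xz + y^2); if e = 2e₁ + 1 is odd, then there exists a homogeneous polynomial h₁ ∈ C[u,v] of degree e₁ such that h = x·h₁(x^2, xz + y^2). -/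
/-!
Write `D = x ∂_y - 2y ∂_z`. Since `x h_y = 2y h_z` and `x` is prime, `h_z = x g`; as `∂_z`
commutes with `D` and `D x = 0`, `g` is again `D`-invariant, of degree `e - 2`. By induction
`g = x^(e mod 2) g₁(x², xz + y²)`. If `∂_v q = g₁`, then `H = x^(e mod 2) q(x², xz + y²)` is
invariant with `H_z = h_z`, so `h - H` is invariant with vanishing `z`-derivative, hence also
vanishing `y`-derivative: it is `c x^e`, which is `x^(e mod 2) (c u^(e/2))(x², xz + y²)`.
-/

open MvPolynomial Finsupp

namespace MvPolynomial

variable {R σ τ : Type*}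

section CommSemiring

variable [CommSemiring R]

theorem pderiv_comm (i j : σ) (p : MvPolynomial σ R) :
    pderiv i (pderiv j p) = pderiv j (pderiv i p) := by
  ext m
  simp only [coeff_pderiv, add_right_comm m, mul_assoc]
  congr 1
  rcases eq_or_ne i j with rfl | hij
  · rfl
  simp [hij, hij.symm, mul_comm]

theorem pderiv_X_pow_mul {i j : σ} (hij : j ≠ i) (k : ℕ) (f : MvPolynomial σ R) :
    pderiv i (X j ^ k * f) = X j ^ k * pderiv i f := by
  rw [pderiv_mul, pderiv_pow, pderiv_X_of_ne hij, mul_zero, zero_mul, zero_add]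

theorem pderiv_aeval [Fintype σ] (f : σ → MvPolynomial τ R) (i : τ) (p : MvPolynomial σ R) :
    pderiv i (aeval f p) = ∑ j, pderiv i (f j) * aeval f (pderiv j p) := by
  classical
  induction p using MvPolynomial.induction_on with
  | C a => simp
  | add p q hp hq => simp only [map_add, hp, hq, mul_add, Finset.sum_add_distrib]
  | mul_X p k hp =>
    simp only [map_mul, aeval_X, pderiv_mul, hp, pderiv_X, map_add, Pi.single_apply, mul_ite,
      mul_one, mul_zero, apply_ite (aeval f), map_zero, mul_add, Finset.sum_add_distrib,
      Finset.sum_ite_eq, Finset.mem_univ, if_true, Finset.sum_mul]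
    rw [mul_comm (aeval f p)]
    simp only [mul_assoc]

theorem IsHomogeneous.of_X_mul {i : σ} {g : MvPolynomial σ R} {n : ℕ}
    (hg : (X i * g).IsHomogeneous (n + 1)) : g.IsHomogeneous n := by
  intro d hd
  have := hg (d := single i 1 + d) (by rwa [coeff_X_mul])
  rw [map_add, weight_single, Pi.one_apply, smul_eq_mul, mul_one] at this
  omega

theorem IsHomogeneous.eq_zero_of_X_dvd {i : σ} {p : MvPolynomial σ R}
    (hp : p.IsHomogeneous 0) (hX : X i ∣ p) : p = 0 := by
  ext d
  rcases eq_or_ne d 0 with rfl | hd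
  · obtain ⟨g, rfl⟩ := hX
    simp [← constantCoeff_eq]
  · exact hp.coeff_eq_zero (by rwa [Ne, degree_eq_zero_iff])

end CommSemiring

section CharZero

variable [CommSemiring R] [NoZeroDivisors R] [CharZero R]

theorem coeff_eq_zero_of_pderiv_eq_zero {i : σ} {p : MvPolynomial σ R} (hp : pderiv i p = 0)
    {d : σ →₀ ℕ} (hd : d i ≠ 0) : coeff d p = 0 := by
  have hcoeff := coeff_pderiv (i := i) p (d - single i 1)
  rw [hp, coeff_zero, tsub_add_cancel_of_le (single_le_iff.mpr (Nat.one_le_iff_ne_zero.mpr hd)),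
    eq_comm] at hcoeff
  exact (mul_eq_zero.mp hcoeff).resolve_right (Nat.cast_add_one_ne_zero _)

theorem IsHomogeneous.eq_C_mul_X_pow {i₀ : σ} {r : MvPolynomial σ R} {e : ℕ}
    (hr : r.IsHomogeneous e) (h : ∀ i ≠ i₀, pderiv i r = 0) :
    r = C (coeff (single i₀ e) r) * X i₀ ^ e := by
  classical
  ext d
  rw [X_pow_eq_monomial, C_mul_monomial, mul_one, coeff_monomial]
  split_ifs with hd
  · rw [hd]
  by_contra hne
  have hsingle : d = single i₀ (d i₀) := by
    ext i
    rcases eq_or_ne i i₀ with rfl | hi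
    · simp
    · rw [single_eq_of_ne hi]
      by_contra hdi
      exact hne (coeff_eq_zero_of_pderiv_eq_zero (h i hi) hdi)
  have hdeg : d.degree = e := by
    by_contra hdeg
    exact hne (hr.coeff_eq_zero hdeg)
  rw [hsingle, degree_single] at hdeg
  rw [hsingle, hdeg] at hd
  exact hd rfl

end CharZero

theorem IsHomogeneous.exists_pderiv_eq [Field R] [CharZero R] (i : σ) {p : MvPolynomial σ R}
    {m : ℕ} (hp : p.IsHomogeneous m) :
    ∃ q : MvPolynomial σ R, q.IsHomogeneous (m + 1) ∧ pderiv i q = p := by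
  refine ⟨∑ d ∈ p.support, monomial (d + single i 1) (coeff d p / (d i + 1)), ?_, ?_⟩
  · refine IsHomogeneous.sum _ _ _ fun d hd ↦ isHomogeneous_monomial _ ?_
    rw [map_add, degree_single]
    by_contra hdeg
    exact mem_support_iff.mp hd (hp.coeff_eq_zero (by omega))
  · conv_rhs => rw [p.as_sum]
    refine (map_sum _ _ _).trans (Finset.sum_congr rfl fun d _ ↦ ?_)
    rw [pderiv_monomial, add_tsub_cancel_right, Finsupp.add_apply, single_eq_same, Nat.cast_add,
      Nat.cast_one, div_mul_cancel₀ _ (Nat.cast_add_one_ne_zero _)]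

end MvPolynomial

section CommSemiring

variable {R : Type*} [CommSemiring R]

noncomputable def quadSubst : MvPolynomial (Fin 2) R →ₐ[R] MvPolynomial (Fin 3) R :=
  aeval ![X 0 ^ 2, X 0 * X 2 + X 1 ^ 2]

theorem pderiv_two_quadSubst (p : MvPolynomial (Fin 2) R) :
    pderiv 2 (quadSubst p) = X 0 * quadSubst (pderiv 1 p) := by
  rw [quadSubst, pderiv_aeval, Fin.sum_univ_two]
  simp

theorem pderiv_one_quadSubst (p : MvPolynomial (Fin 2) R) :
    pderiv 1 (quadSubst p) = 2 * X 1 * quadSubst (pderiv 1 p) := by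
  rw [quadSubst, pderiv_aeval, Fin.sum_univ_two]
  simp

theorem isHomogeneous_quadSubst {p : MvPolynomial (Fin 2) R} {n : ℕ} (hp : p.IsHomogeneous n) :
    (quadSubst p).IsHomogeneous (2 * n) := by
  refine hp.aeval _ fun i ↦ ?_
  fin_cases i
  · exact isHomogeneous_X_pow _ _
  · exact ((isHomogeneous_X R 0).mul (isHomogeneous_X R 2)).add (isHomogeneous_X_pow _ _)

end CommSemiring

section CommRing

variable {R : Type*} [CommRing R]

/-- Invariance under the `𝔾ₐ`-action whose infinitesimal generator is `x ∂_y - 2y ∂_z`. -/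
def IsGaInvariant (h : MvPolynomial (Fin 3) R) : Prop :=
  X 0 * pderiv 1 h - 2 * X 1 * pderiv 2 h = 0

theorem IsGaInvariant.sub {f g : MvPolynomial (Fin 3) R} (hf : IsGaInvariant f)
    (hg : IsGaInvariant g) : IsGaInvariant (f - g) := by
  unfold IsGaInvariant at *
  rw [map_sub, map_sub]
  linear_combination hf - hg

theorem isGaInvariant_X_zero_pow_mul_quadSubst (k : ℕ) (q : MvPolynomial (Fin 2) R) :
    IsGaInvariant (X 0 ^ k * quadSubst q) := by
  rw [IsGaInvariant, pderiv_X_pow_mul (by decide), pderiv_X_pow_mul (by decide),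
    pderiv_one_quadSubst, pderiv_two_quadSubst]
  ring

theorem IsGaInvariant.of_pderiv_two_eq_X_zero_mul [IsDomain R] {h g : MvPolynomial (Fin 3) R}
    (hh : IsGaInvariant h) (hg : pderiv 2 h = X 0 * g) : IsGaInvariant g := by
  have hderiv : pderiv 2 (X 0 * pderiv 1 h - 2 * X 1 * pderiv 2 h) =
      X 0 * (X 0 * pderiv 1 g - 2 * X 1 * pderiv 2 g) := by
    have h2 : pderiv 2 (2 : MvPolynomial (Fin 3) R) = 0 := by
      exact_mod_cast (pderiv 2).map_natCast 2
    simp only [map_sub, pderiv_mul, pderiv_comm 2 1 h, hg, h2,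
      pderiv_X_of_ne (by decide : (0 : Fin 3) ≠ 1), pderiv_X_of_ne (by decide : (0 : Fin 3) ≠ 2),
      pderiv_X_of_ne (by decide : (1 : Fin 3) ≠ 2)]
    ring
  rw [hh, map_zero, eq_comm] at hderiv
  exact (mul_eq_zero.mp hderiv).resolve_left (X_ne_zero 0)

end CommRing

section Field

variable {K : Type*} [Field K] [CharZero K]

theorem IsGaInvariant.X_zero_dvd_pderiv_two {h : MvPolynomial (Fin 3) K} (hh : IsGaInvariant h) :
    X 0 ∣ pderiv 2 h := by
  have hdvd : X 0 ∣ 2 * X 1 * pderiv 2 h := ⟨pderiv 1 h, (sub_eq_zero.mp hh).symm⟩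
  rcases X_dvd_mul_iff.mp hdvd with hdvd | hdvd
  · rcases X_dvd_mul_iff.mp hdvd with h2 | h1
    · have h2_unit : IsUnit (2 : MvPolynomial (Fin 3) K) := by
        rw [← map_ofNat C 2]
        exact (two_ne_zero (α := K)).isUnit.map C
      exact absurd (isUnit_of_dvd_unit h2 h2_unit) X_prime.not_isUnit
    · exact absurd (X_dvd_X.mp h1) (by decide)
  · exact hdvd

theorem IsGaInvariant.exists_eq_of_pderiv_two_eq {e : ℕ} {h : MvPolynomial (Fin 3) K}
    {q : MvPolynomial (Fin 2) K} (hh : h.IsHomogeneous e) (hinv : IsGaInvariant h)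
    (hq : q.IsHomogeneous (e / 2)) (hpq : pderiv 2 h = pderiv 2 (X 0 ^ (e % 2) * quadSubst q)) :
    ∃ h₁ : MvPolynomial (Fin 2) K, h₁.IsHomogeneous (e / 2) ∧
      h = X 0 ^ (e % 2) * quadSubst h₁ := by
  set H := X 0 ^ (e % 2) * quadSubst q
  have hH : H.IsHomogeneous e := by
    have := (isHomogeneous_X_pow (R := K) (0 : Fin 3) (e % 2)).mul (isHomogeneous_quadSubst hq)
    rwa [Nat.mod_add_div] at this
  have hr2 : pderiv 2 (h - H) = 0 := by rw [map_sub, hpq, sub_self]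
  have hr1 : pderiv 1 (h - H) = 0 := by
    have hr := hinv.sub (isGaInvariant_X_zero_pow_mul_quadSubst (e % 2) q)
    rw [IsGaInvariant, hr2, mul_zero, sub_zero] at hr
    exact (mul_eq_zero.mp hr).resolve_left (X_ne_zero 0)
  have hr := (hh.sub hH).eq_C_mul_X_pow (i₀ := 0) fun i hi ↦ by fin_cases i <;> simp_all
  set c := coeff (single 0 e) (h - H)
  refine ⟨q + C c * X 0 ^ (e / 2), hq.add (isHomogeneous_C_mul_X_pow _ _ _), ?_⟩
  rw [map_add, mul_add, ← sub_eq_iff_eq_add', hr]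
  simp only [map_mul, algHom_C, map_pow, quadSubst, aeval_X, Matrix.cons_val_zero, algebraMap_eq]
  conv_lhs => rw [← Nat.mod_add_div e 2]
  ring

theorem IsGaInvariant.exists_eq_X_zero_pow_mul_quadSubst {e : ℕ} {h : MvPolynomial (Fin 3) K}
    (hh : h.IsHomogeneous e) (hinv : IsGaInvariant h) :
    ∃ h₁ : MvPolynomial (Fin 2) K, h₁.IsHomogeneous (e / 2) ∧
      h = X 0 ^ (e % 2) * quadSubst h₁ := by
  induction e using Nat.strong_induction_on generalizing h with
  | _ e ih =>
  obtain ⟨g, hg⟩ := hinv.X_zero_dvd_pderiv_two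
  suffices ∃ q : MvPolynomial (Fin 2) K, q.IsHomogeneous (e / 2) ∧
      pderiv 2 h = pderiv 2 (X 0 ^ (e % 2) * quadSubst q) by
    obtain ⟨q, hq, hpq⟩ := this
    exact hinv.exists_eq_of_pderiv_two_eq hh hq hpq
  rcases Nat.lt_or_ge e 2 with he | he
  · have hdeg : (pderiv 2 h).IsHomogeneous 0 := by convert hh.pderiv using 1; omega
    refine ⟨0, isHomogeneous_zero _ _ _, ?_⟩
    rw [map_zero, mul_zero, map_zero]
    exact hdeg.eq_zero_of_X_dvd ⟨g, hg⟩
  obtain ⟨e, rfl⟩ : ∃ e', e = e' + 2 := ⟨e - 2, by omega⟩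
  have hg_hom : g.IsHomogeneous e := IsHomogeneous.of_X_mul (hg ▸ hh.pderiv)
  obtain ⟨g₁, hg₁, rfl⟩ := ih e (by omega) hg_hom (hinv.of_pderiv_two_eq_X_zero_mul hg)
  obtain ⟨q, hq, hq'⟩ := hg₁.exists_pderiv_eq 1
  refine ⟨q, by rwa [Nat.add_div_right _ two_pos], ?_⟩
  rw [Nat.add_mod_right, pderiv_X_pow_mul (by decide), pderiv_two_quadSubst, hq', hg]
  ring

end Field

theorem stmt5 (h : MvPolynomial (Fin 3) ℂ) (e : ℕ) (hh : h.IsHomogeneous e)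
    (heq : X 0 * pderiv 1 h - 2 * X 1 * pderiv 2 h = 0) :
    (∀ e₁ : ℕ, e = 2 * e₁ →
      ∃ h₁ : MvPolynomial (Fin 2) ℂ, h₁.IsHomogeneous e₁ ∧
        h = aeval ![X 0 ^ 2, X 0 * X 2 + X 1 ^ 2] h₁) ∧
    (∀ e₁ : ℕ, e = 2 * e₁ + 1 →
      ∃ h₁ : MvPolynomial (Fin 2) ℂ, h₁.IsHomogeneous e₁ ∧
        h = X 0 * aeval ![X 0 ^ 2, X 0 * X 2 + X 1 ^ 2] h₁) := by
  obtain ⟨h₁, hh₁, rfl⟩ := IsGaInvariant.exists_eq_X_zero_pow_mul_quadSubst hh heq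
  constructor
  · rintro e₁ rfl
    refine ⟨h₁, by simpa using hh₁, ?_⟩
    simp [quadSubst]
  · rintro e₁ rfl
    refine ⟨h₁, by simpa [Nat.mul_add_div] using hh₁, ?_⟩
    simp [quadSubst]
end

section
/- Let h ∈ C[x,y,z] be a homogeneous polynomial of degree e satisfying x·h_x − z·h_z = 0. If e = 2e₁ is even, then there exists a homogeneous polynomial h₁ ∈ C[u,v] of degree e₁ such that h = h₁(xz, y^2); if e = 2e₁ + 1 is odd, then there exists a homogeneous polynomial h₁ ∈ C[u,v] of degree e₁ such that h = y·h₁(xz, y^2). -/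
/-!
The operator `x ∂ₓ - z ∂_z` multiplies the monomial `x^a y^b z^c` by `a - c`, so it kills `h`
exactly when every monomial of `h` has the form `(xz)^a y^b`; homogeneity gives `2a + b = e`,
so `b` has the parity of `e` and `y^b = y^(e mod 2) (y^2)^(b / 2)`.
-/

namespace MvPolynomial

variable {R σ : Type*}

theorem coeff_X_mul_pderiv [CommSemiring R] (i : σ) (p : MvPolynomial σ R) (m : σ →₀ ℕ) :
    coeff m (X i * pderiv i p) = m i * coeff m p := by
  classical
  induction p using MvPolynomial.induction_on' with
  | add p q hp hq => simp only [map_add, mul_add, coeff_add, hp, hq]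
  | monomial n a =>
    rw [X_mul_pderiv_monomial, coeff_smul, coeff_monomial]
    split_ifs with hnm
    · rw [hnm, nsmul_eq_mul]
    · simp

theorem eq_of_mem_support_of_X_mul_pderiv_eq [CommRing R] [IsDomain R] [CharZero R]
    {p : MvPolynomial σ R} {i j : σ} (hp : X i * pderiv i p = X j * pderiv j p)
    {m : σ →₀ ℕ} (hm : m ∈ p.support) : m i = m j := by
  have hcoeff := congrArg (coeff m) hp
  rw [coeff_X_mul_pderiv, coeff_X_mul_pderiv] at hcoeff
  exact_mod_cast mul_right_cancel₀ (mem_support_iff.mp hm) hcoeff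

theorem IsHomogeneous.sum_eq_of_mem_support [CommSemiring R] [Fintype σ]
    {p : MvPolynomial σ R} {n : ℕ} (hp : p.IsHomogeneous n) {m : σ →₀ ℕ} (hm : m ∈ p.support) :
    ∑ i, m i = n := by
  rw [← Finsupp.degree_eq_sum, Finsupp.degree_eq_weight_one]
  exact hp (mem_support_iff.mp hm)

theorem monomial_eq_C_mul_X_pow_fin_three [CommSemiring R] (m : Fin 3 →₀ ℕ) (c : R) :
    monomial m c = C c * X 0 ^ m 0 * X 1 ^ m 1 * X 2 ^ m 2 := by
  rw [monomial_eq, Finsupp.prod_fintype _ _ (fun _ ↦ pow_zero _), Fin.prod_univ_three]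
  ring

theorem exists_eq_X_one_pow_mul_aeval_of_support [CommSemiring R] {h : MvPolynomial (Fin 3) R}
    {e₁ r : ℕ} (hr : r < 2) (hh : h.IsHomogeneous (2 * e₁ + r))
    (hsupp : ∀ m ∈ h.support, m 0 = m 2) :
    ∃ h₁ : MvPolynomial (Fin 2) R, h₁.IsHomogeneous e₁ ∧
      h = X 1 ^ r * aeval ![X 0 * X 2, X 1 ^ 2] h₁ := by
  have hdeg : ∀ m ∈ h.support, 2 * m 0 + m 1 = 2 * e₁ + r := fun m hm ↦ by
    have hsum := hh.sum_eq_of_mem_support hm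
    rw [Fin.sum_univ_three, ← hsupp m hm] at hsum
    omega
  refine ⟨∑ m ∈ h.support, C (coeff m h) * X 0 ^ m 0 * X 1 ^ (m 1 / 2), ?_, ?_⟩
  · refine IsHomogeneous.sum _ _ _ fun m hm ↦ ?_
    have hm₁ : e₁ = 0 + 1 * m 0 + 1 * (m 1 / 2) := by have := hdeg m hm; omega
    rw [hm₁]
    exact ((isHomogeneous_C _ _).mul ((isHomogeneous_X _ _).pow _)).mul
      ((isHomogeneous_X _ _).pow _)
  · conv_lhs => rw [h.as_sum]
    rw [map_sum, Finset.mul_sum]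
    refine Finset.sum_congr rfl fun m hm ↦ ?_
    obtain ⟨b, hb⟩ : ∃ b, m 1 = 2 * b + r := ⟨m 1 / 2, by have := hdeg m hm; omega⟩
    rw [monomial_eq_C_mul_X_pow_fin_three, ← hsupp m hm, hb, show (2 * b + r) / 2 = b by omega]
    simp only [map_mul, map_pow, aeval_X, aeval_C, algebraMap_eq, Matrix.cons_val_zero,
      Matrix.cons_val_one]
    ring

end MvPolynomial

open MvPolynomial

theorem stmt7 (h : MvPolynomial (Fin 3) ℂ) (e : ℕ) (hh : h.IsHomogeneous e)
    (heq : X 0 * pderiv 0 h - X 2 * pderiv 2 h = 0) :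
    (∀ e₁ : ℕ, e = 2 * e₁ →
      ∃ h₁ : MvPolynomial (Fin 2) ℂ, h₁.IsHomogeneous e₁ ∧
        h = aeval ![X 0 * X 2, X 1 ^ 2] h₁) ∧
    (∀ e₁ : ℕ, e = 2 * e₁ + 1 →
      ∃ h₁ : MvPolynomial (Fin 2) ℂ, h₁.IsHomogeneous e₁ ∧
        h = X 1 * aeval ![X 0 * X 2, X 1 ^ 2] h₁) := by
  have hsupp : ∀ m ∈ h.support, m 0 = m 2 := fun _ hm ↦
    eq_of_mem_support_of_X_mul_pderiv_eq (sub_eq_zero.mp heq) hm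
  constructor
  · rintro e₁ rfl
    simpa only [pow_zero, one_mul] using
      exists_eq_X_one_pow_mul_aeval_of_support (r := 0) zero_lt_two hh hsupp
  · rintro e₁ rfl
    simpa only [pow_one] using
      exists_eq_X_one_pow_mul_aeval_of_support one_lt_two hh hsupp
end

section
/- Let d ≥ 3 be an integer and let f ∈ C[x,y,z] be given by f = xz·((xz)^{m−1} + y^{2m−2}) if d = 2m is even (m ≥ 2) and by f = x·((xz)^m + y^{2m}) if d = 2m + 1 is odd (m ≥ 1). Then the S-module AR(f) of Jacobian syzygies of f is a free S-module of rank 2, admitting a basis consisting of two homogeneous syzygies, one of degree 1 and one of degree d − 2. -/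
open MvPolynomial

/-!
Saito's criterion: suppose no prime divides all entries of `∇f` and `ρ₁ × ρ₂ = c ∇f` with `c` a
unit. Then `ρ₁, ρ₂` are syzygies, as `ρᵢ ⬝ (ρ₁ × ρ₂) = 0`, and they are independent: cross a
relation with `ρ₂` or `ρ₁`. For a syzygy `ρ`, `(ρ × ρ₂) × (ρ₁ × ρ₂) = (ρ ⬝ ρ₁ × ρ₂) ρ₂ = 0`, so
`ρ × ρ₂` is parallel to the primitive vector `∇f`, hence `ρ × ρ₂ = γ ∇f` with `γ` a polynomial.
Likewise `ρ₁ × ρ = δ ∇f`, and Cramer's rule gives `c ρ = γ ρ₁ + δ ρ₂`.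

With `g = (k+2) (xz)^(k+1) + y^(2k+2)`, for `d = 2k + 4` take `ρ₁ = (x, 0, -z)`,
`ρ₂ = (-(2k+2) x y^(2k+1), g, 0)` and `c = 1`; for `d = 2k + 3` take
`ρ₁ = ((2k+2) x, -y, -(2k+4) z)`, `ρ₂ = (0, x^(k+1) z^k, -2 y^(2k+1))` and `c = 2`.
A prime dividing every partial divides the monomial `f_y`, so it is a variable up to a unit,
and setting that variable to zero shows that it does not divide every partial.
-/

open Matrix

section CrossProduct
variable {R : Type*} [CommRing R]

theorem cross_cross_cross_right (a b c : Fin 3 → R) :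
    (a ⨯₃ c) ⨯₃ (b ⨯₃ c) = (a ⬝ᵥ b ⨯₃ c) • c := by
  ext i; fin_cases i <;> simp [cross_apply, dotProduct, Fin.sum_univ_three] <;> ring

/-- Cramer's rule for `a` in the frame `b`, `c`, `Pi.single l 1`. -/
theorem cross_apply_smul_eq (a b c : Fin 3 → R) (l : Fin 3) :
    (b ⨯₃ c) l • a = (a ⨯₃ c) l • b + (b ⨯₃ a) l • c + (a ⬝ᵥ b ⨯₃ c) • Pi.single l 1 := by
  ext i; fin_cases l <;> fin_cases i <;>
    simp [cross_apply, dotProduct, Fin.sum_univ_three] <;> ring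

theorem apply_mul_apply_eq_of_cross_eq_zero {v w : Fin 3 → R} (h : v ⨯₃ w = 0) (i j : Fin 3) :
    v i * w j = v j * w i := by
  simp only [cross_apply, funext_iff, Fin.forall_fin_succ] at h
  fin_cases i <;> fin_cases j <;> simp at * <;> grind

end CrossProduct

theorem exists_basis_pair {R M : Type*} [Ring R] [AddCommGroup M] [Module R M] (e₁ e₂ : M)
    (hind : ∀ s t : R, s • e₁ + t • e₂ = 0 → s = 0 ∧ t = 0)
    (hspan : ∀ v : M, ∃ s t : R, s • e₁ + t • e₂ = v) :
    ∃ B : Module.Basis (Fin 2) R M, B 0 = e₁ ∧ B 1 = e₂ := by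
  have hli : LinearIndependent R ![e₁, e₂] := LinearIndependent.pair_iff.mpr hind
  have hsp : ⊤ ≤ Submodule.span R (Set.range ![e₁, e₂]) := by
    intro v _
    rw [Matrix.range_cons, Matrix.range_cons, Matrix.range_empty, Set.union_empty,
      Set.singleton_union, Submodule.mem_span_pair]
    exact hspan v
  exact ⟨Module.Basis.mk hli hsp, by simp, by simp⟩

theorem ne_zero_of_forall_prime_exists_not_dvd {R ι : Type*} [CommMonoidWithZero R] {F : ι → R}
    {p₀ : R} (hp₀ : Prime p₀) (hF : ∀ p : R, Prime p → ∃ i, ¬ p ∣ F i) : F ≠ 0 := by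
  obtain ⟨i, hi⟩ := hF p₀ hp₀
  exact fun h => hi (h ▸ dvd_zero _)

section Saito
variable {R : Type*} [CommRing R] [IsDomain R] [UniqueFactorizationMonoid R]

theorem dvd_of_forall_dvd_mul {ι : Type*} {F : ι → R} (hF : ∀ p : R, Prime p → ∃ i, ¬ p ∣ F i)
    {a : R} (ha : a ≠ 0) (v : R) (h : ∀ i, a ∣ v * F i) : a ∣ v := by
  induction a using UniqueFactorizationMonoid.induction_on_prime generalizing v with
  | h₁ => exact absurd rfl ha
  | h₂ u hu => exact hu.dvd
  | h₃ a p ha₀ hp ih =>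
    obtain ⟨i, hi⟩ := hF p hp
    obtain ⟨w, rfl⟩ := (hp.dvd_or_dvd (dvd_of_mul_right_dvd (h i))).resolve_right hi
    refine mul_dvd_mul_left p (ih ha₀ w fun j => ?_)
    rw [← mul_dvd_mul_iff_left hp.ne_zero, ← mul_assoc]
    exact h j

theorem exists_eq_smul_of_cross_eq_zero {F : Fin 3 → R} (hF : ∀ p : R, Prime p → ∃ i, ¬ p ∣ F i)
    (hF₀ : F ≠ 0) {v : Fin 3 → R} (hv : v ⨯₃ F = 0) : ∃ γ : R, v = γ • F := by
  obtain ⟨l, hl⟩ : ∃ l, F l ≠ 0 := Function.ne_iff.mp hF₀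
  have hpar := apply_mul_apply_eq_of_cross_eq_zero hv
  obtain ⟨γ, hγ⟩ := dvd_of_forall_dvd_mul hF hl (v l) fun j => ⟨v j, by rw [hpar, mul_comm]⟩
  refine ⟨γ, funext fun j => mul_left_cancel₀ hl ?_⟩
  rw [mul_comm, ← hpar, hγ, Pi.smul_apply, smul_eq_mul]
  ring

theorem exists_cross_eq_smul {F a b : Fin 3 → R} (hF : ∀ p : R, Prime p → ∃ i, ¬ p ∣ F i)
    (hF₀ : F ≠ 0) {c : R} (hc : IsUnit c) (hab : a ⨯₃ b = c • F)
    {ρ : Fin 3 → R} (hρ : ρ ⬝ᵥ F = 0) : ∃ γ : R, ρ ⨯₃ b = γ • F := by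
  refine exists_eq_smul_of_cross_eq_zero hF hF₀ ?_
  have h := cross_cross_cross_right ρ a b
  rw [hab, dotProduct_smul, hρ, smul_zero, zero_smul, map_smul, hc.smul_eq_zero] at h
  exact h

theorem exists_smul_add_smul_eq_of_cross_eq_smul {F ρ₁ ρ₂ : Fin 3 → R}
    (hF : ∀ p : R, Prime p → ∃ i, ¬ p ∣ F i) (hF₀ : F ≠ 0) {c : R} (hc : IsUnit c)
    (hρ : ρ₁ ⨯₃ ρ₂ = c • F) {ρ : Fin 3 → R} (hρF : ρ ⬝ᵥ F = 0) :
    ∃ s t : R, s • ρ₁ + t • ρ₂ = ρ := by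
  obtain ⟨l, hl⟩ : ∃ l, F l ≠ 0 := Function.ne_iff.mp hF₀
  obtain ⟨γ, hγ⟩ := exists_cross_eq_smul hF hF₀ hc hρ hρF
  obtain ⟨δ, hδ⟩ := exists_cross_eq_smul hF hF₀ hc.neg (b := ρ₁)
    (by rw [← cross_anticomm, hρ, neg_smul]) hρF
  have hcramer := cross_apply_smul_eq ρ ρ₁ ρ₂ l
  rw [hρ, hγ, ← cross_anticomm, hδ] at hcramer
  simp only [Pi.smul_apply, Pi.neg_apply, smul_eq_mul, dotProduct_smul, hρF, mul_zero, zero_smul,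
    add_zero] at hcramer
  have hcρ : c • ρ = γ • ρ₁ - δ • ρ₂ :=
    smul_right_injective _ hl (by linear_combination (norm := module) hcramer)
  obtain ⟨u, rfl⟩ := hc
  refine ⟨(u⁻¹ : Rˣ) * γ, -((u⁻¹ : Rˣ) * δ), ?_⟩
  calc ((u⁻¹ : Rˣ) * γ) • ρ₁ + -((u⁻¹ : Rˣ) * δ) • ρ₂ = u⁻¹ • ((u : R) • ρ) := by
        rw [hcρ, Units.smul_def]; module
    _ = ρ := by rw [← Units.smul_def, inv_smul_smul]

theorem exists_basis_of_cross_eq_smul {N : Submodule R (Fin 3 → R)} {F ρ₁ ρ₂ : Fin 3 → R}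
    (hN : ∀ ρ, ρ ∈ N ↔ ρ ⬝ᵥ F = 0) (hF : ∀ p : R, Prime p → ∃ i, ¬ p ∣ F i) (hF₀ : F ≠ 0)
    {c : R} (hc : IsUnit c) (hρ : ρ₁ ⨯₃ ρ₂ = c • F) :
    ∃ B : Module.Basis (Fin 2) R N, (B 0 : Fin 3 → R) = ρ₁ ∧ (B 1 : Fin 3 → R) = ρ₂ := by
  have hN' : ∀ ρ, ρ ∈ N ↔ ρ ⬝ᵥ ρ₁ ⨯₃ ρ₂ = 0 := fun ρ => by
    rw [hN, hρ, dotProduct_smul, hc.smul_eq_zero]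
  have h₁ : ρ₁ ∈ N := (hN' ρ₁).2 (dot_self_cross ρ₁ ρ₂)
  have h₂ : ρ₂ ∈ N := (hN' ρ₂).2 (dot_cross_self ρ₁ ρ₂)
  have hind : ∀ s t : R, s • (⟨ρ₁, h₁⟩ : N) + t • ⟨ρ₂, h₂⟩ = 0 → s = 0 ∧ t = 0 := by
    intro s t hst
    have hst : s • ρ₁ + t • ρ₂ = 0 := congrArg Subtype.val hst
    have hs := congrArg (· ⨯₃ ρ₂) hst
    have ht := congrArg (ρ₁ ⨯₃ ·) hst
    simp only [map_add, map_smul, LinearMap.add_apply, LinearMap.smul_apply, cross_self,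
      smul_zero, add_zero, zero_add, map_zero, LinearMap.zero_apply, hρ, smul_smul] at hs ht
    exact ⟨hc.mul_left_eq_zero.1 ((smul_eq_zero.1 hs).resolve_right hF₀),
      hc.mul_left_eq_zero.1 ((smul_eq_zero.1 ht).resolve_right hF₀)⟩
  have hspan : ∀ v : N, ∃ s t : R, s • (⟨ρ₁, h₁⟩ : N) + t • ⟨ρ₂, h₂⟩ = v := fun ⟨ρ, hρN⟩ => by
    obtain ⟨s, t, h⟩ := exists_smul_add_smul_eq_of_cross_eq_smul hF hF₀ hc hρ ((hN ρ).1 hρN)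
    exact ⟨s, t, Subtype.ext h⟩
  obtain ⟨B, hB₁, hB₂⟩ := exists_basis_pair _ _ hind hspan
  exact ⟨B, by rw [hB₁], by rw [hB₂]⟩

end Saito

section Polynomial
variable {σ : Type*}

theorem aeval_update_X_eq_zero_of_X_dvd {R : Type*} [CommSemiring R] [DecidableEq σ] {i : σ}
    {p : MvPolynomial σ R} (h : X i ∣ p) :
    aeval (R := R) (Function.update (X : σ → MvPolynomial σ R) i 0) p = 0 := by
  obtain ⟨q, rfl⟩ := h
  simp

theorem Prime.exists_associated_X_of_dvd_monomial {K : Type*} [Field K] {p : MvPolynomial σ K}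
    (hp : Prime p) {s : σ →₀ ℕ} {c : K} (hc : c ≠ 0) (h : p ∣ monomial s c) :
    ∃ i, Associated p (X i) := by
  rw [monomial_eq, Finsupp.prod] at h
  have hC : ¬ p ∣ C c := fun h' => hp.not_isUnit (isUnit_of_dvd_unit h' ((Ne.isUnit hc).map C))
  obtain ⟨i, -, hi⟩ := hp.dvd_finsetProd_iff _ |>.1 ((hp.dvd_or_dvd h).resolve_left hC)
  exact ⟨i, hp.associated_of_dvd X_prime (hp.dvd_of_dvd_pow hi)⟩

end Polynomial

local notation "S" => MvPolynomial (Fin 3) ℂ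

theorem mem_AR_iff (f : S) (ρ : Fin 3 → S) : ρ ∈ AR f ↔ ρ ⬝ᵥ (fun i => pderiv i f) = 0 := Iff.rfl

/-- The polynomial `g`: `f_x = z g`, `f_z = x g` for even `d` and `f_x = g` for odd `d`. -/
noncomputable def commonFactor (k : ℕ) : S :=
  C (k + 2 : ℂ) * (X 0 * X 2) ^ (k + 1) + X 1 ^ (2 * k + 2)

theorem isHomogeneous_commonFactor (k : ℕ) : (commonFactor k).IsHomogeneous (2 * k + 2) := by
  refine .add ?_ ?_
  · have h := (((isHomogeneous_X ℂ (0 : Fin 3)).mul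
      (isHomogeneous_X ℂ (2 : Fin 3))).pow (k + 1)).C_mul (k + 2 : ℂ)
    rwa [show (1 + 1) * (k + 1) = 2 * k + 2 by ring] at h
  · simpa using (isHomogeneous_X ℂ (1 : Fin 3)).pow (2 * k + 2)

theorem exists_homogeneous_basis_AR_even (k : ℕ) :
    ∃ B : Module.Basis (Fin 2) S (AR (X 0 * X 2 * ((X 0 * X 2) ^ (k + 1) + X 1 ^ (2 * k + 2)))),
      (∀ i, ((B 0).1 i).IsHomogeneous 1) ∧ (∀ i, ((B 1).1 i).IsHomogeneous (2 * k + 2)) := by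
  set g := commonFactor k
  set F : Fin 3 → S := ![X 2 * g, C (2 * k + 2 : ℂ) * (X 0 * X 1 ^ (2 * k + 1) * X 2), X 0 * g]
  have hgrad :
      (fun i => pderiv i (X 0 * X 2 * ((X 0 * X 2) ^ (k + 1) + X 1 ^ (2 * k + 2)))) = F := by
    funext i; fin_cases i <;> simp [F, g, commonFactor, pderiv_X, map_ofNat] <;> ring
  have hprime : ∀ p : S, Prime p → ∃ i, ¬ p ∣ F i := by
    intro p hp
    by_contra! hdvd
    have hF₁ : F 1 = monomial (Finsupp.single 0 1 + Finsupp.single 1 (2 * k + 1) +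
        Finsupp.single 2 1) (2 * k + 2 : ℂ) := by
      simp only [F, X, monomial_pow, monomial_mul, C_mul_monomial]
      simp
    obtain ⟨i, hi⟩ := hp.exists_associated_X_of_dvd_monomial (by norm_cast) (hF₁ ▸ hdvd 1)
    have hX := fun j => aeval_update_X_eq_zero_of_X_dvd (hi.dvd_iff_dvd_left.1 (hdvd j))
    fin_cases i
    · simpa [F, g, commonFactor] using hX 0
    · have h := hX 0
      simp [F, g, commonFactor, map_ofNat] at h
      norm_cast at h
    · simpa [F, g, commonFactor] using hX 2
  have hcross : ![X 0, 0, -X 2] ⨯₃ ![-(C (2 * k + 2 : ℂ) * (X 0 * X 1 ^ (2 * k + 1))), g, 0] =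
      (1 : S) • F := by
    rw [one_smul]; funext i; fin_cases i <;> simp [F, cross_apply]; ring
  obtain ⟨B, hB₁, hB₂⟩ := exists_basis_of_cross_eq_smul (N := AR _) (mem_AR_iff _)
    (hgrad ▸ hprime) (hgrad ▸ ne_zero_of_forall_prime_exists_not_dvd (X_prime (i := 0)) hprime)
    isUnit_one (hgrad ▸ hcross)
  refine ⟨B, fun i => ?_, fun i => ?_⟩
  · rw [hB₁]
    fin_cases i
    · exact isHomogeneous_X ℂ 0
    · exact isHomogeneous_zero _ _ _
    · exact (isHomogeneous_X ℂ 2).neg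
  · rw [hB₂]
    fin_cases i
    · have h := (((isHomogeneous_X ℂ (0 : Fin 3)).mul
        ((isHomogeneous_X ℂ (1 : Fin 3)).pow (2 * k + 1))).C_mul (2 * k + 2 : ℂ)).neg
      rwa [show 1 + 1 * (2 * k + 1) = 2 * k + 2 by ring] at h
    · exact isHomogeneous_commonFactor k
    · exact isHomogeneous_zero _ _ _

theorem exists_homogeneous_basis_AR_odd (k : ℕ) :
    ∃ B : Module.Basis (Fin 2) S (AR (X 0 * ((X 0 * X 2) ^ (k + 1) + X 1 ^ (2 * k + 2)))),
      (∀ i, ((B 0).1 i).IsHomogeneous 1) ∧ (∀ i, ((B 1).1 i).IsHomogeneous (2 * k + 1)) := by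
  set F : Fin 3 → S := ![commonFactor k, C (2 * k + 2 : ℂ) * (X 0 * X 1 ^ (2 * k + 1)),
    C (k + 1 : ℂ) * (X 0 ^ (k + 2) * X 2 ^ k)]
  have hgrad : (fun i => pderiv i (X 0 * ((X 0 * X 2) ^ (k + 1) + X 1 ^ (2 * k + 2)))) = F := by
    funext i; fin_cases i <;> simp [F, commonFactor, pderiv_X, map_ofNat] <;> ring
  have hprime : ∀ p : S, Prime p → ∃ i, ¬ p ∣ F i := by
    intro p hp
    by_contra! hdvd
    have hF₁ : F 1 = monomial (Finsupp.single 0 1 + Finsupp.single 1 (2 * k + 1))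
        (2 * k + 2 : ℂ) := by
      simp only [F, X, monomial_pow, monomial_mul, C_mul_monomial]
      simp
    obtain ⟨i, hi⟩ := hp.exists_associated_X_of_dvd_monomial (by norm_cast) (hF₁ ▸ hdvd 1)
    have hX := fun j => aeval_update_X_eq_zero_of_X_dvd (hi.dvd_iff_dvd_left.1 (hdvd j))
    fin_cases i <;> [have h := hX 0; have h := hX 2; have h := hX 1] <;>
      simp [F, commonFactor, map_ofNat] at h <;> norm_cast at h
  have hcross : ![C (2 * k + 2 : ℂ) * X 0, -X 1, -(C (2 * k + 4 : ℂ) * X 2)] ⨯₃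
      ![0, X 0 ^ (k + 1) * X 2 ^ k, -(C 2 * X 1 ^ (2 * k + 1))] = (2 : S) • F := by
    funext i; fin_cases i <;> simp [F, commonFactor, cross_apply, map_ofNat] <;> ring
  have h2 : IsUnit (2 : S) := by
    simpa [map_ofNat] using (Ne.isUnit (two_ne_zero : (2 : ℂ) ≠ 0)).map (C : ℂ →+* S)
  obtain ⟨B, hB₁, hB₂⟩ := exists_basis_of_cross_eq_smul (N := AR _) (mem_AR_iff _)
    (hgrad ▸ hprime) (hgrad ▸ ne_zero_of_forall_prime_exists_not_dvd (X_prime (i := 0)) hprime)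
    h2 (hgrad ▸ hcross)
  refine ⟨B, fun i => ?_, fun i => ?_⟩
  · rw [hB₁]
    fin_cases i
    · exact (isHomogeneous_X ℂ 0).C_mul _
    · exact (isHomogeneous_X ℂ 1).neg
    · exact ((isHomogeneous_X ℂ 2).C_mul _).neg
  · rw [hB₂]
    fin_cases i
    · exact isHomogeneous_zero _ _ _
    · have h := ((isHomogeneous_X ℂ (0 : Fin 3)).pow (k + 1)).mul
        ((isHomogeneous_X ℂ (2 : Fin 3)).pow k)
      rwa [show 1 * (k + 1) + 1 * k = 2 * k + 1 by ring] at h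
    · simpa using (((isHomogeneous_X ℂ (1 : Fin 3)).pow (2 * k + 1)).C_mul (2 : ℂ)).neg

theorem stmt13_general (d m : ℕ) (f : MvPolynomial (Fin 3) ℂ)
    (hf : (d = 2 * m ∧ 2 ≤ m ∧ f = X 0 * X 2 * ((X 0 * X 2) ^ (m - 1) + X 1 ^ (2 * m - 2))) ∨
          (d = 2 * m + 1 ∧ 1 ≤ m ∧ f = X 0 * ((X 0 * X 2) ^ m + X 1 ^ (2 * m)))) :
    ∃ B : Module.Basis (Fin 2) (MvPolynomial (Fin 3) ℂ) (AR f),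
      (∀ i, ((B 0).1 i).IsHomogeneous 1) ∧ (∀ i, ((B 1).1 i).IsHomogeneous (d - 2)) := by
  rcases hf with ⟨rfl, hm, rfl⟩ | ⟨rfl, hm, rfl⟩
  · obtain ⟨k, rfl⟩ := Nat.exists_eq_add_of_le' hm
    rw [show k + 2 - 1 = k + 1 by omega, show 2 * (k + 2) - 2 = 2 * k + 2 by omega]
    exact exists_homogeneous_basis_AR_even k
  · obtain ⟨k, rfl⟩ := Nat.exists_eq_add_of_le' hm
    rw [show 2 * (k + 1) = 2 * k + 2 by ring, show 2 * k + 2 + 1 - 2 = 2 * k + 1 by omega]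
    exact exists_homogeneous_basis_AR_odd k

theorem stmt13 (d m : ℕ) (f : MvPolynomial (Fin 3) ℂ) (hd : 3 ≤ d)
    (hf : (d = 2 * m ∧ 2 ≤ m ∧ f = X 0 * X 2 * ((X 0 * X 2) ^ (m - 1) + X 1 ^ (2 * m - 2))) ∨
          (d = 2 * m + 1 ∧ 1 ≤ m ∧ f = X 0 * ((X 0 * X 2) ^ m + X 1 ^ (2 * m)))) :
    ∃ B : Module.Basis (Fin 2) (MvPolynomial (Fin 3) ℂ) (AR f),
      (∀ i, ((B 0).1 i).IsHomogeneous 1) ∧ (∀ i, ((B 1).1 i).IsHomogeneous (d - 2)) :=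
  stmt13_general d m f hf
end

section
/- For every integer m ≥ 2 and f = xz·((xz)^{m−1} + y^{2m−2}) in C[x,y,z], the set of points p ∈ C^3 at which all three partial derivatives f_x, f_y, f_z vanish is exactly the union of the three coordinate axes {(t,0,0) : t ∈ C} ∪ {(0,t,0) : t ∈ C} ∪ {(0,0,t) : t ∈ C}. -/
open MvPolynomial

private lemma ev0 (k : ℕ) (p : Fin 3 → ℂ) :
    eval p (pderiv 0 ((X 0 * X 2 : MvPolynomial (Fin 3) ℂ) ^ (k+2) + X 0 * X 2 * X 1 ^ (2*k+2))) =
      p 2 * (((k:ℂ)+2) * (p 0 * p 2)^(k+1) + p 1 ^ (2*k+2)) := by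
  simp [pderiv_pow, pderiv_mul, pderiv_X_self, pderiv_X_of_ne (show (2:Fin 3) ≠ 0 by decide),
    pderiv_X_of_ne (show (1:Fin 3) ≠ 0 by decide)]
  ring

private lemma ev1 (k : ℕ) (p : Fin 3 → ℂ) :
    eval p (pderiv 1 ((X 0 * X 2 : MvPolynomial (Fin 3) ℂ) ^ (k+2) + X 0 * X 2 * X 1 ^ (2*k+2))) =
      (2*(k:ℂ)+2) * (p 0 * p 2) * p 1 ^ (2*k+1) := by
  simp [pderiv_pow, pderiv_mul, pderiv_X_self, pderiv_X_of_ne (show (0:Fin 3) ≠ 1 by decide),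
    pderiv_X_of_ne (show (2:Fin 3) ≠ 1 by decide)]
  ring

private lemma ev2 (k : ℕ) (p : Fin 3 → ℂ) :
    eval p (pderiv 2 ((X 0 * X 2 : MvPolynomial (Fin 3) ℂ) ^ (k+2) + X 0 * X 2 * X 1 ^ (2*k+2))) =
      p 0 * (((k:ℂ)+2) * (p 0 * p 2)^(k+1) + p 1 ^ (2*k+2)) := by
  simp [pderiv_pow, pderiv_mul, pderiv_X_self, pderiv_X_of_ne (show (0:Fin 3) ≠ 2 by decide),
    pderiv_X_of_ne (show (1:Fin 3) ≠ 2 by decide)]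
  ring

theorem stmt15 (m : ℕ) (hm : 2 ≤ m) :
    let f : MvPolynomial (Fin 3) ℂ := X 0 * X 2 * ((X 0 * X 2) ^ (m - 1) + X 1 ^ (2 * m - 2))
    {p : Fin 3 → ℂ | ∀ i : Fin 3, eval p (pderiv i f) = 0} =
      (Set.range fun t : ℂ => ![t, 0, 0]) ∪ (Set.range fun t : ℂ => ![0, t, 0]) ∪
        (Set.range fun t : ℂ => ![0, 0, t]) := by
  obtain ⟨k, rfl⟩ : ∃ k, m = k + 2 := ⟨m - 2, by omega⟩
  intro f
  have hf : f = (X 0 * X 2 : MvPolynomial (Fin 3) ℂ) ^ (k+2) + X 0 * X 2 * X 1 ^ (2*k+2) := by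
    show X 0 * X 2 * ((X 0 * X 2) ^ (k + 2 - 1) + X 1 ^ (2 * (k + 2) - 2)) = _
    rw [show k + 2 - 1 = k + 1 by omega, show 2 * (k + 2) - 2 = 2 * k + 2 by omega]
    ring
  have hk2 : ((k:ℂ) + 2) ≠ 0 := by
    exact_mod_cast (Nat.cast_ne_zero (R := ℂ)).2 (show k + 2 ≠ 0 by omega)
  have h2k2 : (2*(k:ℂ) + 2) ≠ 0 := by
    exact_mod_cast (Nat.cast_ne_zero (R := ℂ)).2 (show 2 * k + 2 ≠ 0 by omega)
  ext p
  simp only [Set.mem_setOf_eq, Set.mem_union, Set.mem_range, hf]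
  constructor
  · intro h
    have h0 := h 0; have h1 := h 1; have h2 := h 2
    rw [ev0] at h0; rw [ev1] at h1; rw [ev2] at h2
    have h1' : p 0 = 0 ∨ p 2 = 0 ∨ p 1 = 0 := by
      rcases mul_eq_zero.1 h1 with h | h
      · rcases mul_eq_zero.1 h with h | h
        · exact absurd h h2k2
        · rcases mul_eq_zero.1 h with h | h
          · exact Or.inl h
          · exact Or.inr (Or.inl h)
      · exact Or.inr (Or.inr ((pow_eq_zero_iff (show (2*k+1:ℕ) ≠ 0 by omega)).1 h))
    have memx : p 1 = 0 → p 2 = 0 → (∃ t, ![t, 0, 0] = p) := by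
      intro a b; exact ⟨p 0, by funext i; fin_cases i <;> simp [a, b]⟩
    have memy : p 0 = 0 → p 2 = 0 → (∃ t, ![0, t, 0] = p) := by
      intro a b; exact ⟨p 1, by funext i; fin_cases i <;> simp [a, b]⟩
    have memz : p 0 = 0 → p 1 = 0 → (∃ t, ![0, 0, t] = p) := by
      intro a b; exact ⟨p 2, by funext i; fin_cases i <;> simp [a, b]⟩
    rcases h1' with hx | hz | hy
    · -- p 0 = 0 : from h0, p 2 * p1^(2k+2) = 0
      rw [hx] at h0
      simp only [zero_mul, zero_pow (by omega : k + 1 ≠ 0), mul_zero, zero_add] at h0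
      rcases mul_eq_zero.1 h0 with h | h
      · exact Or.inl (Or.inr (memy hx h))
      · exact Or.inr (memz hx ((pow_eq_zero_iff (show (2*k+2:ℕ) ≠ 0 by omega)).1 h))
    · -- p 2 = 0 : from h2, p 0 * p1^(2k+2) = 0
      rw [hz] at h2
      simp only [mul_zero, zero_pow (by omega : k + 1 ≠ 0), zero_add] at h2
      rcases mul_eq_zero.1 h2 with h | h
      · exact Or.inl (Or.inr (memy h hz))
      · exact Or.inl (Or.inl (memx ((pow_eq_zero_iff (show (2*k+2:ℕ) ≠ 0 by omega)).1 h) hz))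
    · -- p 1 = 0 : from h0, p 2 * ((k+2)*(p0 p2)^(k+1)) = 0
      rw [hy] at h0
      simp only [zero_pow (by omega : 2*k + 2 ≠ 0), add_zero] at h0
      rcases mul_eq_zero.1 h0 with h | h
      · exact Or.inl (Or.inl (memx hy h))
      · rcases mul_eq_zero.1 h with h | h
        · exact absurd h hk2
        · rcases mul_eq_zero.1 (pow_eq_zero_iff (by omega : k + 1 ≠ 0) |>.1 h) with h | h
          · exact Or.inr (memz h hy)
          · exact Or.inl (Or.inl (memx hy h))
  · rintro ((⟨t, rfl⟩ | ⟨t, rfl⟩) | ⟨t, rfl⟩) i <;> fin_cases i <;>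
      simp [ev0, ev1, ev2, zero_pow, (by omega : 2*k + 2 ≠ 0), (by omega : 2*k + 1 ≠ 0),
        (by omega : k + 1 ≠ 0)]
end
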